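/- Let L be a Hom-Lie algebra with twist α, and let ρ : L → End(V) and τ : L → End(W) be multiplicative representations on Hom-vector spaces (V,β) and (W,γ). Then (ρ⊗τ)(x) = ρ(x)⊗γ + β⊗τ(x) defines a multiplicative representation of L on the Hom-vector space (V⊗W, β⊗γ): it satisfies (ρ⊗τ)([x,y])∘(β⊗γ) = (ρ⊗τ)(α(x))∘(ρ⊗τ)(y) − (ρ⊗τ)(α(y))∘(ρ⊗τ)(x) and (ρ⊗τ)(α(x))∘(β⊗γ) = (β⊗γ)∘(ρ⊗τ)(x). -/
import Mathlib


open TensorProduct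

variable {K L V W : Type*} [Field K] [AddCommGroup L] [Module K L]
  [AddCommGroup V] [Module K V] [AddCommGroup W] [Module K W]

/-- The tensor product of two representations of a Hom-Lie algebra:
`(ρ⊗τ)(x) = ρ(x)⊗γ + β⊗τ(x)`. -/
noncomputable def tpRep (ρ : L →ₗ[K] Module.End K V) (τ : L →ₗ[K] Module.End K W)
    (β : Module.End K V) (γ : Module.End K W) (x : L) : Module.End K (V ⊗[K] W) :=
  TensorProduct.map (ρ x) γ + TensorProduct.map β (τ x)

/-- The tensor product of two multiplicative representations of a Hom-Lie algebra
is a multiplicative representation on `(V ⊗ W, β ⊗ γ)`. -/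
theorem stmt7 (br : L →ₗ[K] L →ₗ[K] L) (α : L →ₗ[K] L)
    (hanti : ∀ x y : L, br y x = - br x y)
    (hjac : ∀ x y z : L,
      br (br x y) (α z) + br (br z x) (α y) + br (br y z) (α x) = 0)
    (ρ : L →ₗ[K] Module.End K V) (β : Module.End K V)
    (τ : L →ₗ[K] Module.End K W) (γ : Module.End K W)
    (hρ : ∀ x y : L, ρ (br x y) ∘ₗ β = ρ (α x) ∘ₗ ρ y - ρ (α y) ∘ₗ ρ x)
    (hρm : ∀ x : L, ρ (α x) ∘ₗ β = β ∘ₗ ρ x)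
    (hτ : ∀ x y : L, τ (br x y) ∘ₗ γ = τ (α x) ∘ₗ τ y - τ (α y) ∘ₗ τ x)
    (hτm : ∀ x : L, τ (α x) ∘ₗ γ = γ ∘ₗ τ x) :
    (∀ x y : L,
      tpRep ρ τ β γ (br x y) ∘ₗ TensorProduct.map β γ
        = tpRep ρ τ β γ (α x) ∘ₗ tpRep ρ τ β γ y
          - tpRep ρ τ β γ (α y) ∘ₗ tpRep ρ τ β γ x) ∧
    (∀ x : L,
      tpRep ρ τ β γ (α x) ∘ₗ TensorProduct.map β γ
        = TensorProduct.map β γ ∘ₗ tpRep ρ τ β γ x) := by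
  constructor
  · intro x y
    apply TensorProduct.ext'
    intro v w
    have h1 := LinearMap.congr_fun (hρ x y) v
    have h2 := LinearMap.congr_fun (hτ x y) w
    have h3 := LinearMap.congr_fun (hρm x) v
    have h4 := LinearMap.congr_fun (hρm y) v
    have h5 := LinearMap.congr_fun (hτm x) w
    have h6 := LinearMap.congr_fun (hτm y) w
    simp only [LinearMap.comp_apply, LinearMap.sub_apply] at h1 h2 h3 h4 h5 h6
    simp only [tpRep, LinearMap.comp_apply, LinearMap.add_apply, LinearMap.sub_apply,
      TensorProduct.map_tmul, map_add, h1, h2, h3, h4, h5, h6,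
      TensorProduct.sub_tmul, TensorProduct.tmul_sub]
    abel
  · intro x
    apply TensorProduct.ext'
    intro v w
    have h3 := LinearMap.congr_fun (hρm x) v
    have h5 := LinearMap.congr_fun (hτm x) w
    simp only [LinearMap.comp_apply] at h3 h5
    simp only [tpRep, LinearMap.comp_apply, LinearMap.add_apply,
      TensorProduct.map_tmul, map_add, h3, h5]
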